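/- Fix an integer N ≥ 2 and a real x > 0. Define τ(n,N,x) as in Lemma 3 of the paper (the upper bound on patch size). Then as n → ∞: if N is odd, τ(n,N,x) ~ 2^{n+2} e^{-x}, and if N is even, τ(n,N,x) ~ 2^{n+1} e^{-x}. -/

import Mathlib

/-- Ball size `b_m(r)` for integer radius, with `b_m(r) = 1` for `r < 0` by convention. -/
def bb (m : ℕ) (r : ℤ) : ℕ :=
  if r < 0 then 1 else ∑ i ∈ Finset.range (r.toNat + 1), m.choose i

noncomputable def tau (n N : ℕ) (x : ℝ) : ℝ :=
  2 ^ (n + 1) * ∑ i ∈ Finset.range N,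
      Real.exp (-x * ((bb (n - 1) ((i : ℤ) - 1) + bb (n - 1) ((N : ℤ) - i - 1) : ℕ) : ℝ)
            / ((bb (n - 1) ⌊((N : ℚ) - 1) / 2⌋ + bb (n - 1) (⌈((N : ℚ) - 1) / 2⌉ - 1) : ℕ) : ℝ)
          + ((bb (n - 1) ((i : ℤ) - 1) + bb (n - 1) ((N : ℤ) - i - 1) : ℕ) : ℝ) / 2 ^ (n - 1))
    + 2 ^ (n + 1) *
      Real.exp (-x * ((bb (n - 1) ((N : ℤ) - 1) : ℕ) : ℝ)
            / ((bb (n - 1) ⌊((N : ℚ) - 1) / 2⌋ + bb (n - 1) (⌈((N : ℚ) - 1) / 2⌉ - 1) : ℕ) : ℝ)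
          + ((bb (n - 1) ((N : ℤ) - 1) : ℕ) : ℝ) / 2 ^ (n - 1))


/-!
Write `p = n - 1`, `m = ⌊(N-1)/2⌋` and `m' = ⌈(N-1)/2⌉ - 1`, so that every summand of `τ` has
the form `2^{n+1} exp(-x c/d + c/2^p)` with `d = b_p(m) + b_p(m')`, and `c = b_p(a) + b_p(b)` with
`a + b = m + m'` (or `c = b_p(N-1)`). Since `b_p(r) = Θ(p^r)`, every `c/2^p → 0`. If
`{a, b} = {m, m'}` then `c = d` and the summand is asymptotic to `2^{n+1} e^{-x}`; otherwise
`max a b > m`, so `c/d ≥ C(p, m+1)/(2 b_p(m)) → ∞` and the summand is negligible. There are two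
such middle indices when `N` is odd and one when `N` is even.
-/

open Filter Topology Asymptotics Finset

lemma bb_natCast (p k : ℕ) : bb p k = ∑ i ∈ range (k + 1), p.choose i := by
  simp [bb]

lemma bb_pos (p : ℕ) (r : ℤ) : 0 < bb p r := by
  unfold bb
  split
  · exact one_pos
  · exact sum_pos' (fun _ _ => Nat.zero_le _) ⟨0, by simp⟩

lemma bb_mono (p : ℕ) {r s : ℤ} (h : r ≤ s) : bb p r ≤ bb p s := by
  by_cases hr : r < 0
  · rw [bb, if_pos hr]
    exact bb_pos p s
  · lift r to ℕ using not_lt.1 hr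
    lift s to ℕ using by omega
    rw [bb_natCast, bb_natCast]
    exact sum_le_sum_of_subset (range_subset_range.2 (by omega))

lemma choose_le_bb (p k : ℕ) : p.choose k ≤ bb p k := by
  rw [bb_natCast]
  exact single_le_sum (f := p.choose) (fun _ _ => Nat.zero_le _) (self_mem_range_succ k)

lemma isBigO_bb (r : ℤ) : (fun p : ℕ => (bb p r : ℝ)) =O[atTop] fun p => (p : ℝ) ^ r.toNat := by
  by_cases hr : r < 0
  · simpa [bb, hr, Int.toNat_of_nonpos hr.le] using isBoundedUnder_const
  · lift r to ℕ using not_lt.1 hr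
    simp only [bb_natCast, Nat.cast_sum, Int.toNat_natCast]
    refine IsBigO.fun_sum fun i hi => (isTheta_choose i).isBigO.trans ?_
    exact ((isBigO_pow_pow_cobounded_of_le (Nat.lt_succ_iff.1 (mem_range.1 hi))).mono
      IsOrderBornology.atTop_le_cobounded).comp_tendsto tendsto_natCast_atTop_atTop

lemma tendsto_bb_div_two_pow (r : ℤ) : Tendsto (fun p : ℕ => (bb p r : ℝ) / 2 ^ p) atTop (𝓝 0) :=
  ((isBigO_bb r).trans_isLittleO
    (isLittleO_pow_const_const_pow_of_one_lt _ one_lt_two)).tendsto_div_nhds_zero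

lemma tendsto_choose_succ_div_bb (k : ℕ) :
    Tendsto (fun p : ℕ => (p.choose (k + 1) : ℝ) / bb p k) atTop atTop := by
  have hlittle : (fun p : ℕ => (bb p k : ℝ)) =o[atTop] fun p => (p.choose (k + 1) : ℝ) := by
    simpa using (isBigO_bb k).trans_isLittleO
      (((isLittleO_pow_pow_atTop_of_lt k.lt_succ_self).comp_tendsto
        tendsto_natCast_atTop_atTop).trans_isBigO (isTheta_choose (k + 1)).symm.isBigO)
  have hpos : ∀ᶠ p : ℕ in atTop, 0 < (bb p k : ℝ) / p.choose (k + 1) := by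
    filter_upwards [eventually_ge_atTop (k + 1)] with p hp
    have := Nat.choose_pos hp
    have := bb_pos p k
    positivity
  have := (tendsto_nhdsWithin_iff.2 ⟨hlittle.tendsto_div_nhds_zero, hpos⟩).inv_tendsto_nhdsGT_zero
  simpa only [Pi.inv_def, inv_div] using this

lemma tendsto_exp_neg_mul_div_self_add {x : ℝ} {c : ℕ → ℝ} (hc0 : ∀ p, c p ≠ 0)
    (hc : Tendsto (fun p => c p / 2 ^ p) atTop (𝓝 0)) :
    Tendsto (fun p => Real.exp (-x * c p / c p + c p / 2 ^ p)) atTop (𝓝 (Real.exp (-x))) := by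
  have h : Tendsto (fun p => -x + c p / 2 ^ p) atTop (𝓝 (-x)) := by
    simpa using hc.const_add (-x)
  refine ((Real.continuous_exp.tendsto _).comp h).congr fun p => ?_
  simp only [Function.comp_apply, mul_div_assoc, div_self (hc0 p), mul_one]

lemma tendsto_exp_neg_mul_div_add_of_tendsto_atTop {x : ℝ} (hx : 0 < x) {c d : ℕ → ℝ}
    (hcd : Tendsto (fun p => c p / d p) atTop atTop)
    (hc : Tendsto (fun p => c p / 2 ^ p) atTop (𝓝 0)) :
    Tendsto (fun p => Real.exp (-x * c p / d p + c p / 2 ^ p)) atTop (𝓝 0) := by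
  have h : Tendsto (fun p => -x * c p / d p) atTop atBot := by
    simpa only [mul_div_assoc] using hcd.const_mul_atTop_of_neg (neg_neg_of_pos hx)
  exact Real.tendsto_exp_atBot.comp (h.atBot_add hc)

lemma tendsto_exp_bb_of_choose_le {x : ℝ} (hx : 0 < x) (m : ℕ) {m' : ℤ} (hm' : m' ≤ m)
    {c : ℕ → ℕ} (hc : ∀ p, p.choose (m + 1) ≤ c p)
    (hc2 : Tendsto (fun p => (c p : ℝ) / 2 ^ p) atTop (𝓝 0)) :
    Tendsto (fun p => Real.exp (-x * (c p : ℝ) / ((bb p m + bb p m' : ℕ) : ℝ)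
      + (c p : ℝ) / 2 ^ p)) atTop (𝓝 0) := by
  refine tendsto_exp_neg_mul_div_add_of_tendsto_atTop hx
    (tendsto_atTop_mono (fun p => ?_) ((tendsto_choose_succ_div_bb m).atTop_div_const two_pos)) hc2
  have hd : bb p m' ≤ bb p m := bb_mono p hm'
  have := bb_pos p m
  rw [div_div]
  gcongr
  · exact_mod_cast hc p
  · push_cast
    linarith [(Nat.cast_le (α := ℝ)).2 hd]

lemma tendsto_exp_bb_add_bb {x : ℝ} (hx : 0 < x) (m : ℕ) {m' a b : ℤ} (hm' : m' ≤ m)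
    (hm : m ≤ m' + 1) (hab : a + b = m + m') :
    Tendsto (fun p => Real.exp (-x * ((bb p a + bb p b : ℕ) : ℝ) / ((bb p m + bb p m' : ℕ) : ℝ)
      + ((bb p a + bb p b : ℕ) : ℝ) / 2 ^ p)) atTop
      (𝓝 (if a = m ∨ b = m then Real.exp (-x) else 0)) := by
  have hc2 : Tendsto (fun p => ((bb p a + bb p b : ℕ) : ℝ) / 2 ^ p) atTop (𝓝 0) := by
    simpa [add_div] using (tendsto_bb_div_two_pow a).add (tendsto_bb_div_two_pow b)
  split_ifs with h
  · have hcd : ∀ p, bb p a + bb p b = bb p m + bb p m' := by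
      rcases h with rfl | rfl
      · simp [show b = m' by omega]
      · simp [show a = m' by omega, add_comm]
    simp only [hcd] at hc2 ⊢
    exact tendsto_exp_neg_mul_div_self_add (fun p => by positivity [bb_pos p m]) hc2
  · refine tendsto_exp_bb_of_choose_le hx m hm' (fun p => (choose_le_bb p (m + 1)).trans ?_) hc2
    rcases (by omega : ((m + 1 : ℕ) : ℤ) ≤ a ∨ ((m + 1 : ℕ) : ℤ) ≤ b) with ha | hb
    · exact (bb_mono p ha).trans (Nat.le_add_right _ _)
    · exact (bb_mono p hb).trans (Nat.le_add_left _ _)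

lemma sum_range_ite_middle (N : ℕ) (hN : 2 ≤ N) (c : ℝ) :
    (∑ i ∈ range N, if (i : ℤ) - 1 = ((N - 1) / 2 : ℕ) ∨ (N : ℤ) - i - 1 = ((N - 1) / 2 : ℕ)
      then c else 0) = (if Even N then 1 else 2) * c := by
  rw [← sum_filter, sum_const, nsmul_eq_mul]
  congr 1
  obtain ⟨t, rfl | rfl⟩ := Nat.even_or_odd' N
  · have : {i ∈ range (2 * t) | ((i : ℕ) : ℤ) - 1 = ((2 * t - 1) / 2 : ℕ)
        ∨ ((2 * t : ℕ) : ℤ) - i - 1 = ((2 * t - 1) / 2 : ℕ)} = {t} := by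
      ext i; simp only [mem_filter, mem_range, mem_singleton]; omega
    rw [this]
    simp
  · have : {i ∈ range (2 * t + 1) | ((i : ℕ) : ℤ) - 1 = ((2 * t + 1 - 1) / 2 : ℕ)
        ∨ ((2 * t + 1 : ℕ) : ℤ) - i - 1 = ((2 * t + 1 - 1) / 2 : ℕ)} = {t, t + 1} := by
      ext i; simp only [mem_filter, mem_range, mem_insert, mem_singleton]; omega
    rw [this, card_pair (by omega)]
    simp

lemma tendsto_tau_div_two_pow {N : ℕ} (hN : 2 ≤ N) {x : ℝ} (hx : 0 < x) :
    Tendsto (fun n => tau n N x / 2 ^ (n + 1)) atTop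
      (𝓝 ((if Even N then 1 else 2) * Real.exp (-x))) := by
  have hcast : ((N : ℚ) - 1) / 2 = (((N : ℤ) - 1 : ℤ) : ℚ) / ((2 : ℕ) : ℚ) := by push_cast; ring
  have hfloor : ⌊((N : ℚ) - 1) / 2⌋ = ((N - 1) / 2 : ℕ) := by
    rw [hcast, Rat.floor_intCast_div_natCast]
    omega
  have hceil : ⌈((N : ℚ) - 1) / 2⌉ - 1 = (N : ℤ) - 2 - ((N - 1) / 2 : ℕ) := by
    rw [hcast, Rat.ceil_intCast_div_natCast]
    omega
  rw [← tendsto_add_atTop_iff_nat 1, ← sum_range_ite_middle N hN, ← add_zero (∑ i ∈ _, _)]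
  have h2 (k : ℕ) : (2 : ℝ) ^ k ≠ 0 := pow_ne_zero k two_ne_zero
  simp only [tau, hfloor, hceil, Nat.add_sub_cancel, ← mul_add, mul_div_cancel_left₀ _ (h2 _)]
  refine (tendsto_finsetSum _ fun i _ => tendsto_exp_bb_add_bb hx _ ?_ ?_ ?_).add
    (tendsto_exp_bb_of_choose_le hx _ ?_ (fun p => (choose_le_bb p _).trans (bb_mono p ?_))
      (tendsto_bb_div_two_pow _)) <;> omega

theorem tau_asymptotic (N : ℕ) (hN : 2 ≤ N) (x : ℝ) (hx : 0 < x) :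
    (Odd N → Filter.Tendsto (fun n : ℕ => tau n N x / (2 ^ (n + 2) * Real.exp (-x)))
      Filter.atTop (nhds 1)) ∧
    (Even N → Filter.Tendsto (fun n : ℕ => tau n N x / (2 ^ (n + 1) * Real.exp (-x)))
      Filter.atTop (nhds 1)) := by
  have hlim := tendsto_tau_div_two_pow hN hx
  have hexp := Real.exp_pos (-x)
  constructor
  · intro hodd
    rw [if_neg (Nat.not_even_iff_odd.2 hodd)] at hlim
    simpa [pow_succ, div_mul_eq_div_div, mul_div_assoc, hexp.ne']
      using hlim.div_const (2 * Real.exp (-x))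
  · intro heven
    rw [if_pos heven, one_mul] at hlim
    simpa [div_mul_eq_div_div, hexp.ne'] using hlim.div_const (Real.exp (-x))
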